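/- Let E be a finite graph and v a vertex of E that is a sink or lies on a cycle. If w is another such vertex, then the ℤ-order ideals of T_E generated by v and w coincide (⟨v⟩ = ⟨w⟩) if and only if v ≥ w and w ≥ v (i.e., there are paths in both directions between v and w, or v = w). -/

import Mathlib

/-! Directed graphs are given by types `V` (vertices), `E` (edges) and maps
`s r : E → V` (source and range). -/

/-- `PathTo s r u v l` : the list of edges `l` is a path from `u` to `v`
(the empty list is the trivial path at `u = v`). -/
inductive PathTo {V E : Type*} (s r : E → V) : V → V → List E → Prop
  | nil (v : V) : PathTo s r v v []
  | cons (e : E) {w : V} {l : List E} :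
      PathTo s r (r e) w l → PathTo s r (s e) w (e :: l)

variable {V E : Type*}

/-- `u ≥ v` : there is a finite path from `u` to `v`. -/
def Reach (s r : E → V) (u v : V) : Prop := ∃ l : List E, PathTo s r u v l

/-- A subset of vertices is hereditary if it is closed under ranges of edges. -/
def Hereditary (s r : E → V) (H : Set V) : Prop := ∀ e : E, s e ∈ H → r e ∈ H

/-- A subset of vertices is saturated if it contains every regular vertex all of
whose out-neighbours lie in the set. -/
def Saturated (s r : E → V) (H : Set V) : Prop :=
  ∀ v : V, (∃ e, s e = v) → (∀ e, s e = v → r e ∈ H) → v ∈ H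

/-- `R(H)` : the set of vertices from which there is a finite path into `H`. -/
def ReachSet (s r : E → V) (H : Set V) : Set V := {u : V | ∃ v ∈ H, Reach s r u v}

/-- `T(w)` : the tree rooted at `w`, i.e. the set of vertices reachable from `w`. -/
def TreeOf (s r : E → V) (w : V) : Set V := {v : V | Reach s r w v}

/-- `H^⊥ = E⁰ \ R(H)`. -/
def Hperp (s r : E → V) (H : Set V) : Set V := Set.univ \ ReachSet s r H

/-- The hereditary and saturated closure of a set of vertices. -/
def HSClosure (s r : E → V) (X : Set V) : Set V :=
  ⋂₀ {S : Set V | X ⊆ S ∧ Hereditary s r S ∧ Saturated s r S}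

/-- A cycle: a nonempty closed path whose edges have pairwise distinct sources. -/
def IsCycle (s r : E → V) (l : List E) : Prop :=
  ∃ v : V, l ≠ [] ∧ PathTo s r v v l ∧ (l.map s).Nodup

/-- A path (given as a nonempty list of edges starting at `w`) flows to `H` if its
last edge has source outside `H` and range inside `H`. -/
def FlowsTo (s r : E → V) (H : Set V) (w : V) (l : List E) : Prop :=
  (∃ u : V, PathTo s r w u l) ∧ ∃ e : E, l.getLast? = some e ∧ s e ∉ H ∧ r e ∈ H

/-! ### The talented monoid of a row-finite graph -/

/-- The free commutative monoid on `V × ℤ`. -/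
abbrev FreeTal (V : Type*) := (V × ℤ) →₀ ℕ

/-- The defining relations of the talented monoid:
`v(i) = Σ_{e ∈ s⁻¹(v)} r(e)(i+1)` for every regular vertex `v` and `i ∈ ℤ`. -/
def talRel {V E : Type*} (s r : E → V) (hrow : ∀ v : V, {e : E | s e = v}.Finite) :
    FreeTal V → FreeTal V → Prop := fun x y =>
  ∃ (v : V) (i : ℤ), (∃ e, s e = v) ∧ x = Finsupp.single (v, i) 1 ∧
    y = ∑ e ∈ (hrow v).toFinset, Finsupp.single (r e, i + 1) 1

/-- The congruence generated by the defining relations. -/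
noncomputable def talCon {V E : Type*} (s r : E → V) (hrow : ∀ v : V, {e : E | s e = v}.Finite) :
    AddCon (FreeTal V) := addConGen (talRel s r hrow)

/-- The talented monoid `T_E` of a row-finite graph. -/
abbrev TalMon {V E : Type*} (s r : E → V) (hrow : ∀ v : V, {e : E | s e = v}.Finite) :=
  (talCon s r hrow).Quotient

/-- The generator `v(i)` of the talented monoid, for `p = (v, i)`. -/
noncomputable def talGen {V E : Type*} (s r : E → V) (hrow : ∀ v : V, {e : E | s e = v}.Finite)
    (p : V × ℤ) : TalMon s r hrow :=
  (talCon s r hrow).mk' (Finsupp.single p 1)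

section OrderNotions

variable {M : Type*} [AddCommMonoid M]

/-- The algebraic preorder: `a ≤ b` iff `b = a + c` for some `c`. -/
def AlgLE (a b : M) : Prop := ∃ c, b = a + c

/-- Strict algebraic order: `a < b` iff `b = a + c` for some nonzero `c`. -/
def AlgLT (a b : M) : Prop := ∃ c, c ≠ 0 ∧ b = a + c

/-- Comparability with respect to the algebraic order. -/
def CmpRel (a b : M) : Prop := a = b ∨ AlgLT a b ∨ AlgLT b a

/-- The orthogonal set `I^⊥ = {a | a ∥ I} ∪ {0}`. -/
def perpSet (I : Set M) : Set M :=
  {a : M | a = 0 ∨ ∀ x ∈ I, x ≠ 0 → ¬ CmpRel a x}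

end OrderNotions

/-- The ℤ-order ideal `⟨H⟩` of the talented monoid generated by a set of vertices `H`:
all elements below a finite sum of shifted generators `v(i)`, `v ∈ H`. -/
def genIdeal {V E : Type*} (s r : E → V) (hrow : ∀ v : V, {e : E | s e = v}.Finite)
    (H : Set V) : Set (TalMon s r hrow) :=
  {x | ∃ l : List (V × ℤ), (∀ p ∈ l, p.1 ∈ H) ∧
    AlgLE x (l.map (talGen s r hrow)).sum}
/-!
If `w(0) ∈ ⟨v⟩` then `v ≥ w`: the set `H` of vertices that do not reach `w` is hereditary, and it
is saturated because `w` is a sink or lies on a cycle. Hence sending `u(i)` to `0` for `u ∈ H` and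
to `∞` otherwise defines a monoid map `T_E → ℕ∞`. It kills `⟨v⟩` when `v ∈ H`, but not `w(0)`.
Conversely, a path of length `n` from `w` to `v` gives `v(i + n) ≤ w(i)`, so `⟨v⟩ ⊆ ⟨w⟩`.
-/

section AlgLE

variable {M : Type*} [AddCommMonoid M]

theorem AlgLE.refl (a : M) : AlgLE a a :=
  ⟨0, (add_zero a).symm⟩

theorem AlgLE.trans {a b c : M} (h₁ : AlgLE a b) (h₂ : AlgLE b c) : AlgLE a c := by
  obtain ⟨x, rfl⟩ := h₁
  obtain ⟨y, rfl⟩ := h₂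
  exact ⟨x + y, add_assoc _ _ _⟩

theorem AlgLE.add {a b c d : M} (h₁ : AlgLE a b) (h₂ : AlgLE c d) : AlgLE (a + c) (b + d) := by
  obtain ⟨x, rfl⟩ := h₁
  obtain ⟨y, rfl⟩ := h₂
  exact ⟨x + y, add_add_add_comm _ _ _ _⟩

theorem algLE_list_sum_map {α : Type*} {l : List α} {f g : α → M}
    (h : ∀ a ∈ l, AlgLE (f a) (g a)) : AlgLE (l.map f).sum (l.map g).sum := by
  induction l with
  | nil => exact AlgLE.refl _
  | cons a l ih =>
    simp only [List.map_cons, List.sum_cons]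
    exact (h a List.mem_cons_self).add (ih fun b hb => h b (List.mem_cons_of_mem a hb))

theorem AlgLE.map_le {N : Type*} [AddCommMonoid N] [PartialOrder N] [CanonicallyOrderedAdd N]
    (f : M →+ N) {a b : M} (h : AlgLE a b) : f a ≤ f b := by
  obtain ⟨c, rfl⟩ := h
  simp

end AlgLE

section Paths

variable {s r : E → V}

theorem PathTo.append {u m x : V} {l₁ l₂ : List E}
    (h₁ : PathTo s r u m l₁) (h₂ : PathTo s r m x l₂) : PathTo s r u x (l₁ ++ l₂) := by
  induction h₁ with
  | nil => exact h₂
  | cons e _ ih => exact PathTo.cons e (ih h₂)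

theorem Reach.trans {u m x : V} (h₁ : Reach s r u m) (h₂ : Reach s r m x) : Reach s r u x :=
  let ⟨_, p₁⟩ := h₁
  let ⟨_, p₂⟩ := h₂
  ⟨_, p₁.append p₂⟩

theorem PathTo.reach_of_mem {u x : V} {l : List E} (h : PathTo s r u x l) {e : E} (he : e ∈ l) :
    Reach s r u (s e) ∧ Reach s r (r e) x := by
  induction h with
  | nil => simp at he
  | @cons e' _ l h ih =>
    rcases List.mem_cons.mp he with rfl | he
    · exact ⟨⟨[], .nil _⟩, ⟨l, h⟩⟩
    · exact ⟨Reach.trans ⟨[e'], .cons e' (.nil _)⟩ (ih he).1, (ih he).2⟩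

theorem IsCycle.reach_source {c : List E} (hc : IsCycle s r c) {e : E} (he : e ∈ c) :
    Reach s r (r e) (s e) :=
  let ⟨_, _, hpath, _⟩ := hc
  (hpath.reach_of_mem he).2.trans (hpath.reach_of_mem he).1

theorem hereditary_not_reach (w : V) : Hereditary s r {u | ¬ Reach s r u w} :=
  fun e hs hr => hs (Reach.trans ⟨[e], .cons e (.nil _)⟩ hr)

theorem saturated_not_reach {w : V}
    (hw : (¬ ∃ e, s e = w) ∨ ∃ c : List E, IsCycle s r c ∧ ∃ e ∈ c, s e = w) :
    Saturated s r {u | ¬ Reach s r u w} := by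
  rintro u hreg hout ⟨l, hl⟩
  cases hl with
  | nil =>
    rcases hw with hsink | ⟨c, hc, e', he', hs⟩
    · exact hsink hreg
    · exact hout e' hs (hs ▸ hc.reach_source he')
  | cons e' hl => exact hout e' rfl ⟨_, hl⟩

end Paths

section TalentedMonoid

variable {s r : E → V} {hrow : ∀ v : V, {e : E | s e = v}.Finite}

theorem talGen_eq_sum {v : V} (hv : ∃ e, s e = v) (i : ℤ) :
    talGen s r hrow (v, i) = ∑ e ∈ (hrow v).toFinset, talGen s r hrow (r e, i + 1) := by
  have hrel : talCon s r hrow (Finsupp.single (v, i) 1)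
      (∑ e ∈ (hrow v).toFinset, Finsupp.single (r e, i + 1) 1) :=
    AddConGen.Rel.of _ _ ⟨v, i, hv, rfl, rfl⟩
  exact ((talCon s r hrow).eq.mpr hrel).trans (map_sum (talCon s r hrow).mk' _ _)

theorem algLE_talGen_range (e : E) (i : ℤ) :
    AlgLE (talGen s r hrow (r e, i + 1)) (talGen s r hrow (s e, i)) := by
  classical
  have he : e ∈ (hrow (s e)).toFinset := by simp
  exact ⟨_, by rw [talGen_eq_sum ⟨e, rfl⟩, ← Finset.add_sum_erase _ _ he]⟩

theorem PathTo.algLE_talGen {u x : V} {l : List E} (h : PathTo s r u x l) (i : ℤ) :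
    AlgLE (talGen s r hrow (x, i + l.length)) (talGen s r hrow (u, i)) := by
  induction h generalizing i with
  | nil => simpa using AlgLE.refl _
  | @cons e _ l _ ih =>
    have hidx : i + ((e :: l).length : ℤ) = i + 1 + l.length := by
      push_cast [List.length_cons]; ring
    exact hidx ▸ (ih (i + 1)).trans (algLE_talGen_range e i)

theorem genIdeal_subset_of_reach {v w : V} (h : Reach s r w v) :
    genIdeal s r hrow {v} ⊆ genIdeal s r hrow {w} := by
  obtain ⟨L, hL⟩ := h
  rintro x ⟨l, hl, hx⟩
  refine ⟨l.map fun p => (w, p.2 - L.length), fun _ hp => ?_, hx.trans ?_⟩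
  · obtain ⟨_, -, rfl⟩ := List.mem_map.mp hp
    rfl
  · rw [List.map_map]
    refine algLE_list_sum_map fun ⟨u, n⟩ hp => ?_
    obtain rfl : u = v := hl _ hp
    simpa using hL.algLE_talGen (hrow := hrow) (n - L.length)

theorem talGen_mem_genIdeal {v : V} (i : ℤ) : talGen s r hrow (v, i) ∈ genIdeal s r hrow {v} :=
  ⟨[(v, i)], by simp, by simpa using AlgLE.refl _⟩

open Classical in
noncomputable def freeWeight (H : Set V) : FreeTal V →+ ℕ∞ :=
  Finsupp.liftAddHom fun p => multiplesHom ℕ∞ (if p.1 ∈ H then 0 else ⊤)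

open Classical in
theorem freeWeight_single (H : Set V) (p : V × ℤ) :
    freeWeight H (Finsupp.single p 1) = if p.1 ∈ H then 0 else ⊤ := by
  simp [freeWeight]

/-- Saturation is what makes `v(i) = Σ r(e)(i+1)` hold for the weight when `v ∉ H`: some
`r(e)` lies outside `H`, so the right side is also `∞`. -/
theorem talCon_le_ker_freeWeight {H : Set V} (hH : Hereditary s r H) (hS : Saturated s r H) :
    talCon s r hrow ≤ AddCon.ker (freeWeight H) := by
  classical
  refine AddCon.addConGen_le.mpr ?_
  rintro _ _ ⟨v, i, hreg, rfl, rfl⟩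
  rw [AddCon.ker_rel, map_sum, freeWeight_single]
  simp only [freeWeight_single]
  by_cases hv : v ∈ H
  · rw [if_pos hv, Finset.sum_eq_zero]
    intro e he
    have hse : s e = v := by simpa using he
    rw [if_pos (hH e (hse ▸ hv))]
  · obtain ⟨e, he, hre⟩ : ∃ e, s e = v ∧ r e ∉ H := by
      by_contra! hall
      exact hv (hS v hreg hall)
    have hmem : e ∈ (hrow v).toFinset := by simpa using he
    rw [if_neg hv, eq_comm, ← top_le_iff]
    calc (⊤ : ℕ∞) = if r e ∈ H then 0 else ⊤ := by rw [if_neg hre]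
      _ ≤ _ := Finset.single_le_sum (f := fun e' => if r e' ∈ H then (0 : ℕ∞) else ⊤)
            (fun _ _ => zero_le) hmem

noncomputable def talWeight {H : Set V} (hH : Hereditary s r H) (hS : Saturated s r H) :
    TalMon s r hrow →+ ℕ∞ :=
  (talCon s r hrow).lift (freeWeight H) (talCon_le_ker_freeWeight hH hS)

open Classical in
theorem talWeight_talGen {H : Set V} (hH : Hereditary s r H) (hS : Saturated s r H)
    (p : V × ℤ) : talWeight (hrow := hrow) hH hS (talGen s r hrow p) = if p.1 ∈ H then 0 else ⊤ :=
  freeWeight_single H p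

theorem mem_of_talGen_mem_genIdeal {X H : Set V} (hH : Hereditary s r H) (hS : Saturated s r H)
    (hXH : X ⊆ H) {w : V} {i : ℤ} (hw : talGen s r hrow (w, i) ∈ genIdeal s r hrow X) :
    w ∈ H := by
  classical
  obtain ⟨l, hl, hle⟩ := hw
  have hsum : talWeight hH hS (l.map (talGen s r hrow)).sum = 0 := by
    rw [map_list_sum, List.map_map]
    refine List.sum_eq_zero fun x hx => ?_
    obtain ⟨p, hp, rfl⟩ := List.mem_map.mp hx
    exact (talWeight_talGen hH hS p).trans (if_pos (hXH (hl p hp)))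
  have hzero := le_antisymm ((hle.map_le (talWeight hH hS)).trans hsum.le) zero_le
  rw [talWeight_talGen] at hzero
  by_contra hwH
  simp [if_neg hwH] at hzero

theorem reach_of_talGen_mem_genIdeal {v w : V}
    (hw : (¬ ∃ e, s e = w) ∨ ∃ c : List E, IsCycle s r c ∧ ∃ e ∈ c, s e = w)
    (hmem : talGen s r hrow (w, 0) ∈ genIdeal s r hrow {v}) : Reach s r v w := by
  by_contra hvw
  exact mem_of_talGen_mem_genIdeal (hereditary_not_reach w) (saturated_not_reach hw)
    (Set.singleton_subset_iff.mpr hvw) hmem ⟨[], .nil w⟩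

end TalentedMonoid

theorem stmt_18_general {V E : Type*} (s r : E → V)
    (hrow : ∀ v : V, {e : E | s e = v}.Finite)
    (v w : V)
    (hv : (¬ ∃ e, s e = v) ∨ ∃ c : List E, IsCycle s r c ∧ ∃ e ∈ c, s e = v)
    (hw : (¬ ∃ e, s e = w) ∨ ∃ c : List E, IsCycle s r c ∧ ∃ e ∈ c, s e = w) :
    genIdeal s r hrow {v} = genIdeal s r hrow {w} ↔
      (Reach s r v w ∧ Reach s r w v) := by
  constructor
  · intro hEq
    exact ⟨reach_of_talGen_mem_genIdeal hw (hEq.superset (talGen_mem_genIdeal 0)),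
      reach_of_talGen_mem_genIdeal hv (hEq.subset (talGen_mem_genIdeal 0))⟩
  · rintro ⟨hvw, hwv⟩
    exact (genIdeal_subset_of_reach hwv).antisymm (genIdeal_subset_of_reach hvw)

theorem stmt_18 {V E : Type*} [Finite V] [Finite E] (s r : E → V)
    (hrow : ∀ v : V, {e : E | s e = v}.Finite)
    (v w : V)
    (hv : (¬ ∃ e, s e = v) ∨ ∃ c : List E, IsCycle s r c ∧ ∃ e ∈ c, s e = v)
    (hw : (¬ ∃ e, s e = w) ∨ ∃ c : List E, IsCycle s r c ∧ ∃ e ∈ c, s e = w) :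
    genIdeal s r hrow {v} = genIdeal s r hrow {w} ↔
      (Reach s r v w ∧ Reach s r w v) :=
  stmt_18_general s r hrow v w hv hw
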